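/- Let V, W be n-graded vector spaces over a field 𝕂 of characteristic 0, and let E be the ℤ×ℤⁿ-graded vector space with E^{(0,x)} = V^x, E^{(1,x)} = W^x and E^{(k,*)} = 0 otherwise. Let P ∈ M^{(1,0)}(E) (a bilinear map E×E → E of weight (0,0)), and set μ(X₁,X₂) := P(X₁,X₂) for X₁,X₂ ∈ V, λ(X)Y := P(X,Y) and ρ(X)Y := (−1)^{⟨x,y⟩} P(Y,X) for X ∈ V^x, Y ∈ W^y. Then [P,P]^Δ = 0 if and only if (μ,λ,ρ) is a multigraded bimodule structure, i.e.: (1) μ is associative; (2) λ(μ(X₁,X₂)) = λ(X₁)∘λ(X₂); (3) ρ(μ(X₁,X₂)) = (−1)^{⟨x₁,x₂⟩} ρ(X₂)∘ρ(X₁); (4) λ(X₁)∘ρ(X₂) = (−1)^{⟨x₁,x₂⟩} ρ(X₂)∘λ(X₁), for all homogeneous X_i ∈ V^{x_i}. -/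

import Mathlib

namespace NR

open Finset

/-- The sign `(-1)^z` for an integer `z`. -/
def sgn (z : ℤ) : ℤ := (-1) ^ z.natAbs

/-- The inner product `⟨x,y⟩ = ∑ i, xⁱ yⁱ` of multidegrees `x, y ∈ ℤⁿ`. -/
def pairZ (n : ℕ) (x y : Fin n → ℤ) : ℤ := ∑ i, x i * y i

/-- The inner product of `(n+1)`-degrees in `ℤ × ℤⁿ`. -/
def prE (n : ℕ) (g h : ℤ × (Fin n → ℤ)) : ℤ := g.1 * h.1 + pairZ n g.2 h.2

/-- Shift a sequence: `shiftSeq f i = (f i, f (i+1), …)`. -/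
def shiftSeq {β : Type*} (f : ℕ → β) (i : ℕ) : ℕ → β := fun m => f (m + i)

/-- Insert the value `c` at slot `i` of the sequence `f`, where `c` replaces
`a` consecutive entries of `f` (the entries `f i, …, f (i+a-1)`). -/
def insSeq {β : Type*} (a i : ℕ) (c : β) (f : ℕ → β) : ℕ → β :=
  fun l => if l < i then f l else if l = i then c else f (l + a - 1)

/-- Permute the first `a` entries of a sequence by `σ`. -/
def permSeq {β : Type*} (a : ℕ) (σ : Equiv.Perm (Fin a)) (f : ℕ → β) : ℕ → β :=
  fun l => if h : l < a then f ((σ ⟨l, h⟩ : Fin a) : ℕ) else f l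

/-- The multigraded sign `sign(σ, x)` of a permutation `σ` of `a` symbols with respect to
the multidegrees `x 0, …, x (a-1)`; it is the ordinary sign times the Koszul sign
collected over the inversions of `σ`. -/
def gsign {G : Type*} (pr : G → G → ℤ) (a : ℕ) (σ : Equiv.Perm (Fin a)) (x : ℕ → G) : ℤ :=
  ((Equiv.Perm.sign σ : ℤˣ) : ℤ) *
    (-1) ^ (∑ p ∈ Finset.univ.filter
        (fun p : Fin a × Fin a => p.1 < p.2 ∧ σ p.2 < σ p.1),
        pr (x ((σ p.1 : Fin a) : ℕ)) (x ((σ p.2 : Fin a) : ℕ))).natAbs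

section Ops

variable {G U : Type*} [AddCommGroup G] [AddCommGroup U]

/-- The operation `j(K₁)K₂` of the multigraded Nijenhuis–Richardson calculus.
`K₁` represents an element of `M^{(k₁,κ₁)}(U)` of arity `a₁ = k₁+1` and `K₂` one of
`M^{(k₂,κ₂)}(U)` of arity `a₂ = k₂+1`; an element of arity `a` is coded as a function
taking the sequence of multidegrees of the (homogeneous) arguments and the sequence of
arguments, and depending only on the first `a` of them. -/
def jop (pr : G → G → ℤ) (a₁ : ℕ) (κ₁ : G) (a₂ : ℕ) (κ₂ : G)
    (K₁ K₂ : (ℕ → G) → (ℕ → U) → U) : (ℕ → G) → (ℕ → U) → U :=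
  fun x X => ∑ i ∈ Finset.range a₂,
    sgn (((a₁ : ℤ) - 1) * (i : ℤ) + pr κ₁ (κ₂ + ∑ l ∈ Finset.range i, x l)) •
      K₂ (insSeq a₁ i ((∑ m ∈ Finset.range a₁, x (m + i)) + κ₁) x)
         (insSeq a₁ i (K₁ (shiftSeq x i) (shiftSeq X i)) X)

/-- The multigraded bracket `[K₁,K₂]^Δ = j(K₁)K₂ - (-1)^{k₁k₂+⟨κ₁,κ₂⟩} j(K₂)K₁`. -/
def brD (pr : G → G → ℤ) (a₁ : ℕ) (κ₁ : G) (a₂ : ℕ) (κ₂ : G)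
    (K₁ K₂ : (ℕ → G) → (ℕ → U) → U) : (ℕ → G) → (ℕ → U) → U :=
  fun x X => jop pr a₁ κ₁ a₂ κ₂ K₁ K₂ x X
    - sgn (((a₁ : ℤ) - 1) * ((a₂ : ℤ) - 1) + pr κ₁ κ₂) • jop pr a₂ κ₂ a₁ κ₁ K₂ K₁ x X

end Ops

/-- `K` represents a (`a`-linear) element of `M(U)`: it does not depend on the degree
sequence, depends only on the first `a` arguments, and is `𝕂`-multilinear in them. -/
def IsML (𝕂 : Type*) [Field 𝕂] {G U U' : Type*} [AddCommGroup U] [Module 𝕂 U]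
    [AddCommGroup U'] [Module 𝕂 U'] (a : ℕ) (K : (ℕ → G) → (ℕ → U) → U') : Prop :=
  (∀ x x' X, K x X = K x' X) ∧
  (∀ x X X', (∀ i, i < a → X i = X' i) → K x X = K x X') ∧
  (∀ x X i, i < a →
    (∀ u v : U, K x (Function.update X i (u + v))
        = K x (Function.update X i u) + K x (Function.update X i v)) ∧
    (∀ (r : 𝕂) (u : U), K x (Function.update X i (r • u)) = r • K x (Function.update X i u)))

/-- `K ∈ M^{(a-1,κ)}(U)`: an `a`-linear map mapping `U^{x₀} × ⋯ × U^{x_{a-1}}` into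
`U^{x₀+⋯+x_{a-1}+κ}`. -/
def MDeg (𝕂 : Type*) [Field 𝕂] {G U : Type*} [AddCommGroup G] [AddCommGroup U] [Module 𝕂 U]
    (gr : G → Submodule 𝕂 U) (a : ℕ) (κ : G) (K : (ℕ → G) → (ℕ → U) → U) : Prop :=
  IsML 𝕂 a K ∧
  ∀ x X, (∀ i, X i ∈ gr (x i)) → K x X ∈ gr ((∑ i ∈ Finset.range a, x i) + κ)

/-- The multigraded alternator `α` on elements of arity `a`. -/
def alt (𝕂 : Type*) [Field 𝕂] {G U U' : Type*} [AddCommGroup U'] [Module 𝕂 U']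
    (pr : G → G → ℤ) (a : ℕ) (K : (ℕ → G) → (ℕ → U) → U') : (ℕ → G) → (ℕ → U) → U' :=
  fun x X => (a.factorial : 𝕂)⁻¹ •
    ∑ σ : Equiv.Perm (Fin a),
      ((gsign pr a σ x : ℤ) : 𝕂) • K (permSeq a σ x) (permSeq a σ X)

/-- The operation `i(K₁)K₂ = ((k₁+k₂+1)!/((k₁+1)!(k₂+1)!)) α(j(K₁)K₂)`. -/
def iop (𝕂 : Type*) [Field 𝕂] {G U : Type*} [AddCommGroup G] [AddCommGroup U] [Module 𝕂 U]
    (pr : G → G → ℤ) (a₁ : ℕ) (κ₁ : G) (a₂ : ℕ) (κ₂ : G)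
    (K₁ K₂ : (ℕ → G) → (ℕ → U) → U) : (ℕ → G) → (ℕ → U) → U :=
  fun x X =>
    (((a₁ + a₂ - 1).factorial : 𝕂) / ((a₁.factorial : 𝕂) * (a₂.factorial : 𝕂))) •
      alt 𝕂 pr (a₁ + a₂ - 1) (jop pr a₁ κ₁ a₂ κ₂ K₁ K₂) x X

/-- The multigraded Nijenhuis–Richardson bracket
`[K₁,K₂]^∧ = i(K₁)K₂ - (-1)^{k₁k₂+⟨κ₁,κ₂⟩} i(K₂)K₁`. -/
def brW (𝕂 : Type*) [Field 𝕂] {G U : Type*} [AddCommGroup G] [AddCommGroup U] [Module 𝕂 U]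
    (pr : G → G → ℤ) (a₁ : ℕ) (κ₁ : G) (a₂ : ℕ) (κ₂ : G)
    (K₁ K₂ : (ℕ → G) → (ℕ → U) → U) : (ℕ → G) → (ℕ → U) → U :=
  fun x X => iop 𝕂 pr a₁ κ₁ a₂ κ₂ K₁ K₂ x X
    - sgn (((a₁ : ℤ) - 1) * ((a₂ : ℤ) - 1) + pr κ₁ κ₂) • iop 𝕂 pr a₂ κ₂ a₁ κ₁ K₂ K₁ x X

/-- `K ∈ A^{(a-1,κ)}(U) = α(M^{(a-1,κ)}(U))`, i.e. `K ∈ M^{(a-1,κ)}(U)` and `K` is fixed by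
the multigraded alternator (on homogeneous arguments). -/
def ADeg (𝕂 : Type*) [Field 𝕂] {G U : Type*} [AddCommGroup G] [AddCommGroup U] [Module 𝕂 U]
    (pr : G → G → ℤ) (gr : G → Submodule 𝕂 U) (a : ℕ) (κ : G)
    (K : (ℕ → G) → (ℕ → U) → U) : Prop :=
  MDeg 𝕂 gr a κ K ∧
  ∀ x X, (∀ i, X i ∈ gr (x i)) → alt 𝕂 pr a K x X = K x X

/-- The bilinear map `P` coded as an element of arity `2`. -/
def KofBil {𝕂 : Type*} [Field 𝕂] {G U : Type*} [AddCommGroup U] [Module 𝕂 U]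
    (P : U →ₗ[𝕂] U →ₗ[𝕂] U) : (ℕ → G) → (ℕ → U) → U :=
  fun _ X => P (X 0) (X 1)


section VW

variable {𝕂 : Type} [Field 𝕂] {V W : Type} [AddCommGroup V] [Module 𝕂 V]
  [AddCommGroup W] [Module 𝕂 W]

/-- The `(ℤ × ℤⁿ)`-grading of `E = V ⊕ W` with `E^{(0,x)} = V^x`, `E^{(1,x)} = W^x` and
`E^{(q,x)} = 0` otherwise. -/
def EgrP (𝕂 : Type) [Field 𝕂] (n : ℕ) {V W : Type} [AddCommGroup V] [Module 𝕂 V]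
    [AddCommGroup W] [Module 𝕂 W] (grV : (Fin n → ℤ) → Submodule 𝕂 V)
    (grW : (Fin n → ℤ) → Submodule 𝕂 W) : ℤ × (Fin n → ℤ) → Submodule 𝕂 (V × W) :=
  fun g =>
    if g.1 = 0 then (grV g.2).prod (⊥ : Submodule 𝕂 W)
    else if g.1 = 1 then (⊥ : Submodule 𝕂 V).prod (grW g.2)
    else ⊥

/-- `μ(X₁,X₂) = P(X₁,X₂)` (the `V`-part of `P` on `V × V`). -/
def bmu (P : (V × W) →ₗ[𝕂] (V × W) →ₗ[𝕂] (V × W)) (X₁ X₂ : V) : V :=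
  (P (X₁, 0) (X₂, 0)).1

/-- `λ(X)Y = P(X,Y)` for `X ∈ V`, `Y ∈ W`. -/
def blam (P : (V × W) →ₗ[𝕂] (V × W) →ₗ[𝕂] (V × W)) (X : V) (Y : W) : W :=
  (P (X, 0) ((0 : V), Y)).2

/-- `π(X)Y = P(X,Y)` for `X ∈ V`, `Y ∈ W` (the representation in the Lie case). -/
def bpi (P : (V × W) →ₗ[𝕂] (V × W) →ₗ[𝕂] (V × W)) (X : V) (Y : W) : W :=
  (P (X, 0) ((0 : V), Y)).2

/-- `ρ(X)Y = (−1)^{⟨x,y⟩} P(Y,X)` for homogeneous `X ∈ V^x`, `Y ∈ W^y`. -/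
def brho (n : ℕ) (P : (V × W) →ₗ[𝕂] (V × W) →ₗ[𝕂] (V × W))
    (x y : Fin n → ℤ) (X : V) (Y : W) : W :=
  sgn (pairZ n x y) • (P ((0 : V), Y) (X, (0 : W))).2

/-- A `k`-linear map `C ∈ L^{(k,c)}(V,W)` of weight `c` (coded as in `IsML`,
with values in `W`). -/
def LDeg (𝕂 : Type) [Field 𝕂] (n : ℕ) {V W : Type} [AddCommGroup V] [Module 𝕂 V]
    [AddCommGroup W] [Module 𝕂 W]
    (grV : (Fin n → ℤ) → Submodule 𝕂 V) (grW : (Fin n → ℤ) → Submodule 𝕂 W)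
    (a : ℕ) (c : Fin n → ℤ) (C : (ℕ → (Fin n → ℤ)) → (ℕ → V) → W) : Prop :=
  IsML 𝕂 a C ∧
  ∀ x X, (∀ i, X i ∈ grV (x i)) → C x X ∈ grW ((∑ i ∈ Finset.range a, x i) + c)

/-- A `k`-linear map `V × ⋯ × V → End(W)` of total weight `c`
(an element of `L^{(k,*)}(V, End(W))`). -/
def LEDeg (𝕂 : Type) [Field 𝕂] (n : ℕ) {V W : Type} [AddCommGroup V] [Module 𝕂 V]
    [AddCommGroup W] [Module 𝕂 W]
    (grV : (Fin n → ℤ) → Submodule 𝕂 V) (grW : (Fin n → ℤ) → Submodule 𝕂 W)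
    (a : ℕ) (c : Fin n → ℤ) (C : (ℕ → (Fin n → ℤ)) → (ℕ → V) → W → W) : Prop :=
  (∀ x x' X, C x X = C x' X) ∧
  (∀ x X X', (∀ i, i < a → X i = X' i) → C x X = C x X') ∧
  (∀ x X i, i < a →
    (∀ u v : V, C x (Function.update X i (u + v))
        = C x (Function.update X i u) + C x (Function.update X i v)) ∧
    (∀ (r : 𝕂) (u : V), C x (Function.update X i (r • u)) = r • C x (Function.update X i u))) ∧
  (∀ x X, IsLinearMap 𝕂 (C x X)) ∧
  (∀ x X, (∀ i, X i ∈ grV (x i)) → ∀ (y : Fin n → ℤ) (Y : W), Y ∈ grW y →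
    C x X Y ∈ grW ((∑ i ∈ Finset.range a, x i) + c + y))

/-- The element of `M^{(k-1,(1,c))}(E)` corresponding to `C ∈ L^{(k,c)}(V,W)`. -/
def KCof (n : ℕ) {V W : Type} [AddCommGroup V] [AddCommGroup W]
    (C : (ℕ → (Fin n → ℤ)) → (ℕ → V) → W) :
    (ℕ → ℤ × (Fin n → ℤ)) → (ℕ → V × W) → V × W :=
  fun x X => ((0 : V), C (fun i => (x i).2) (fun i => (X i).1))

/-- The element of `M^{(1,(-1,0))}(E)` corresponding to a multiplication `ν : W × W → W`. -/
def KNu {𝕂 : Type} [Field 𝕂] (n : ℕ) {V W : Type} [AddCommGroup V] [AddCommGroup W]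
    [Module 𝕂 W] (ν : W →ₗ[𝕂] W →ₗ[𝕂] W) :
    (ℕ → ℤ × (Fin n → ℤ)) → (ℕ → V × W) → V × W :=
  fun _ X => ((0 : V), ν (X 0).2 (X 1).2)

/-- Merge slots `i` and `i+1` of a sequence into the single value `c` at slot `i`. -/
def mergeAt {β : Type*} (i : ℕ) (c : β) (f : ℕ → β) : ℕ → β :=
  fun l => if l < i then f l else if l = i then c else f (l + 1)

/-- Delete slot `i` of a sequence. -/
def delAt {β : Type*} (i : ℕ) (f : ℕ → β) : ℕ → β :=
  fun l => if l < i then f l else f (l + 1)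

/-- Prepend the value `c` to a sequence. -/
def consAt {β : Type*} (c : β) (f : ℕ → β) : ℕ → β :=
  fun l => if l = 0 then c else f (l - 1)

/-- Insert the value `c` at slot `p` of a sequence (shifting the later entries). -/
def ins1 {β : Type*} (p : ℕ) (c : β) (f : ℕ → β) : ℕ → β :=
  fun l => if l < p then f l else if l = p then c else f (l - 1)

end VW

/-! For a bilinear `P` of weight zero, `[P,P]^Δ(X₀,X₁,X₂) = 2 (P(P(X₀,X₁),X₂) − P(X₀,P(X₁,X₂)))`,
so in characteristic zero `[P,P]^Δ = 0` exactly when `P` is associative on homogeneous elements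
of `E = V ⊕ W`. Weight zero forces `P(W,W) ⊆ E^{(2,*)} = 0` and `P(V,W), P(W,V) ⊆ W`. Splitting
each homogeneous element into its `V`- and `W`-components, associativity reduces to triples of
pure type: those with two entries in `W` vanish on both sides, and the types `VVV`, `VVW`, `WVV`,
`VWV` are exactly conditions (1), (2), (3), (4), the signs coming from the one built into `ρ`. -/

lemma sgn_eq_negOnePow (z : ℤ) : sgn z = z.negOnePow := by
  rw [sgn, ← Int.coe_negOnePow_natCast, Int.natCast_natAbs, Int.negOnePow_abs]

lemma sgn_add (a b : ℤ) : sgn (a + b) = sgn a * sgn b := by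
  simp only [sgn_eq_negOnePow, Int.negOnePow_add, Units.val_mul]

lemma sgn_mul_self (a : ℤ) : sgn a * sgn a = 1 := by
  rw [← sgn_add, ← two_mul, sgn_eq_negOnePow, Int.negOnePow_two_mul, Units.val_one]

lemma sgn_smul_eq_sgn_smul_iff {M : Type*} [AddCommGroup M] {s t u : ℤ} (h : Even (s + t + u))
    {a b : M} : sgn s • a = sgn t • b ↔ b = sgn u • a := by
  have hu : sgn u = sgn s * sgn t := by
    rw [← sgn_add, sgn_eq_negOnePow, sgn_eq_negOnePow, Units.val_inj, Int.negOnePow_eq_iff,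
      Int.even_iff]
    rw [Int.even_iff] at h
    omega
  rw [hu, mul_comm, ← smul_smul]
  constructor
  · intro hab; rw [hab, smul_smul, sgn_mul_self, one_smul]
  · intro hb; rw [hb, smul_smul, sgn_mul_self, one_smul]

lemma pairZ_eq_dotProduct (n : ℕ) (x y : Fin n → ℤ) : pairZ n x y = x ⬝ᵥ y := rfl

lemma prE_zero_left (n : ℕ) (g : ℤ × (Fin n → ℤ)) : prE n 0 g = 0 := by
  simp [prE, pairZ]

lemma linearMap_ext_of_iSup_eq_top {R M N ι : Type*} [Semiring R] [AddCommMonoid M] [Module R M]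
    [AddCommMonoid N] [Module R N] {p : ι → Submodule R M} (hp : ⨆ i, p i = ⊤)
    {f g : M →ₗ[R] N} (h : ∀ i, ∀ m ∈ p i, f m = g m) : f = g := by
  refine LinearMap.ext_on (s := ⋃ i, (p i : Set M)) (by rw [← Submodule.iSup_eq_span, hp]) ?_
  rintro m ⟨_, ⟨i, rfl⟩, hm⟩
  exact h i m hm

section Associator

variable {𝕂 : Type*} [Field 𝕂] {G U : Type*} [AddCommGroup G] [AddCommGroup U] [Module 𝕂 U]
  {pr : G → G → ℤ}

lemma jop_KofBil_self (hpr : ∀ g, pr 0 g = 0) (P : U →ₗ[𝕂] U →ₗ[𝕂] U) (x : ℕ → G)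
    (X : ℕ → U) :
    jop pr 2 0 2 0 (KofBil P) (KofBil P) x X
      = P (P (X 0) (X 1)) (X 2) - P (X 0) (P (X 1) (X 2)) := by
  simp [jop, KofBil, Finset.sum_range_succ, insSeq, shiftSeq, hpr, sgn, sub_eq_add_neg]

lemma brD_KofBil_self (hpr : ∀ g, pr 0 g = 0) (P : U →ₗ[𝕂] U →ₗ[𝕂] U) (x : ℕ → G)
    (X : ℕ → U) :
    brD pr 2 0 2 0 (KofBil P) (KofBil P) x X
      = (2 : ℤ) • (P (P (X 0) (X 1)) (X 2) - P (X 0) (P (X 1) (X 2))) := by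
  have hsgn : sgn ((((2 : ℕ) : ℤ) - 1) * (((2 : ℕ) : ℤ) - 1) + 0) = -1 := rfl
  rw [brD, jop_KofBil_self hpr, hpr, hsgn, neg_one_smul, sub_neg_eq_add, two_smul]

lemma brD_KofBil_self_eq_zero_iff [IsAddTorsionFree U] (hpr : ∀ g, pr 0 g = 0)
    (gr : G → Submodule 𝕂 U) (P : U →ₗ[𝕂] U →ₗ[𝕂] U) :
    (∀ x X, (∀ i, X i ∈ gr (x i)) → brD pr 2 0 2 0 (KofBil P) (KofBil P) x X = 0) ↔
      ∀ g h k u v w, u ∈ gr g → v ∈ gr h → w ∈ gr k → P (P u v) w = P u (P v w) := by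
  simp only [brD_KofBil_self hpr, smul_eq_zero, two_ne_zero, false_or, sub_eq_zero]
  constructor
  · intro H g h k u v w hu hv hw
    simpa using H (fun i => if i = 0 then g else if i = 1 then h else k)
      (fun i => if i = 0 then u else if i = 1 then v else w)
      (by rintro (_ | _ | _) <;> simpa)
  · intro H x X hX
    exact H _ _ _ _ _ _ (hX 0) (hX 1) (hX 2)

end Associator

section Bimodule

variable {𝕂 : Type} [Field 𝕂] {n : ℕ} {V W : Type} [AddCommGroup V] [Module 𝕂 V]
  [AddCommGroup W] [Module 𝕂 W] {grV : (Fin n → ℤ) → Submodule 𝕂 V}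
  {grW : (Fin n → ℤ) → Submodule 𝕂 W} {P : (V × W) →ₗ[𝕂] (V × W) →ₗ[𝕂] (V × W)}

variable (n grV grW P) in
def IsMultigradedBimodule : Prop :=
  (∀ (x₁ x₂ x₃ : Fin n → ℤ) (X₁ X₂ X₃ : V),
      X₁ ∈ grV x₁ → X₂ ∈ grV x₂ → X₃ ∈ grV x₃ →
      bmu P (bmu P X₁ X₂) X₃ = bmu P X₁ (bmu P X₂ X₃)) ∧
  (∀ (x₁ x₂ : Fin n → ℤ) (X₁ X₂ : V) (Y : W),
      X₁ ∈ grV x₁ → X₂ ∈ grV x₂ →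
      blam P (bmu P X₁ X₂) Y = blam P X₁ (blam P X₂ Y)) ∧
  (∀ (x₁ x₂ y : Fin n → ℤ) (X₁ X₂ : V) (Y : W),
      X₁ ∈ grV x₁ → X₂ ∈ grV x₂ → Y ∈ grW y →
      brho n P (x₁ + x₂) y (bmu P X₁ X₂) Y
        = sgn (pairZ n x₁ x₂) • brho n P x₂ (x₁ + y) X₂ (brho n P x₁ y X₁ Y)) ∧
  (∀ (x₁ x₂ y : Fin n → ℤ) (X₁ X₂ : V) (Y : W),
      X₁ ∈ grV x₁ → X₂ ∈ grV x₂ → Y ∈ grW y →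
      blam P X₁ (brho n P x₂ y X₂ Y)
        = sgn (pairZ n x₁ x₂) • brho n P x₂ (x₁ + y) X₂ (blam P X₁ Y))

lemma mem_EgrP_zero {x : Fin n → ℤ} {u : V × W} :
    u ∈ EgrP 𝕂 n grV grW (0, x) ↔ u.1 ∈ grV x ∧ u.2 = 0 := by
  simp [EgrP, Submodule.mem_prod]

lemma mem_EgrP_one {y : Fin n → ℤ} {u : V × W} :
    u ∈ EgrP 𝕂 n grV grW (1, y) ↔ u.1 = 0 ∧ u.2 ∈ grW y := by
  simp [EgrP, Submodule.mem_prod]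

lemma mk_zero_mem_EgrP {x : Fin n → ℤ} {a : V} (ha : a ∈ grV x) :
    ((a, 0) : V × W) ∈ EgrP 𝕂 n grV grW (0, x) :=
  mem_EgrP_zero.mpr ⟨ha, rfl⟩

lemma zero_mk_mem_EgrP {y : Fin n → ℤ} {b : W} (hb : b ∈ grW y) :
    ((0, b) : V × W) ∈ EgrP 𝕂 n grV grW (1, y) :=
  mem_EgrP_one.mpr ⟨rfl, hb⟩

lemma fst_mem_and_snd_mem_of_mem_EgrP {g : ℤ × (Fin n → ℤ)} {u : V × W}
    (hu : u ∈ EgrP 𝕂 n grV grW g) : u.1 ∈ grV g.2 ∧ u.2 ∈ grW g.2 := by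
  unfold EgrP at hu
  split_ifs at hu
  · exact ⟨hu.1, (Submodule.mem_bot 𝕂).mp hu.2 ▸ zero_mem _⟩
  · exact ⟨(Submodule.mem_bot 𝕂).mp hu.1 ▸ zero_mem _, hu.2⟩
  · rw [(Submodule.mem_bot 𝕂).mp hu]; exact ⟨zero_mem _, zero_mem _⟩

lemma apply_apply_eq_of_components (u v w : V × W)
    (h : ∀ u' ∈ ({(u.1, 0), (0, u.2)} : Set (V × W)),
      ∀ v' ∈ ({(v.1, 0), (0, v.2)} : Set (V × W)),
      ∀ w' ∈ ({(w.1, 0), (0, w.2)} : Set (V × W)), P (P u' v') w' = P u' (P v' w')) :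
    P (P u v) w = P u (P v w) := by
  have hsplit : ∀ z : V × W, z = (z.1, 0) + (0, z.2) := fun z => by simp
  rw [hsplit u, hsplit v, hsplit w]
  simp (disch := simp) only [map_add, LinearMap.add_apply, h]

lemma blam_eq_comp (a : V) (Y : W) :
    blam P a Y = (LinearMap.snd 𝕂 V W ∘ₗ P (a, 0) ∘ₗ LinearMap.inr 𝕂 V W) Y := rfl

lemma blam_zsmul (a : V) (c : ℤ) (Y : W) : blam P a (c • Y) = c • blam P a Y := by
  simp only [blam_eq_comp, map_zsmul]

lemma brho_zsmul (x y : Fin n → ℤ) (X : V) (c : ℤ) (Y : W) :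
    brho n P x y X (c • Y) = c • brho n P x y X Y := by
  have h : ((0 : V), c • Y) = c • ((0 : V), Y) := by simp
  rw [brho, brho, h, map_zsmul, LinearMap.smul_apply, Prod.smul_snd, smul_comm]

variable (hP : ∀ (g h : ℤ × (Fin n → ℤ)) (u v : V × W),
  u ∈ EgrP 𝕂 n grV grW g → v ∈ EgrP 𝕂 n grV grW h → P u v ∈ EgrP 𝕂 n grV grW (g + h))
include hP

lemma apply_inl_inl {x y : Fin n → ℤ} {a b : V} (ha : a ∈ grV x) (hb : b ∈ grV y) :
    P (a, 0) (b, 0) = (bmu P a b, 0) ∧ bmu P a b ∈ grV (x + y) := by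
  have h := hP (0, x) (0, y) _ _ (mk_zero_mem_EgrP ha) (mk_zero_mem_EgrP hb)
  rw [Prod.mk_add_mk, zero_add, mem_EgrP_zero] at h
  exact ⟨Prod.ext rfl h.2, h.1⟩

lemma apply_inl_inr {x y : Fin n → ℤ} {a : V} {b : W} (ha : a ∈ grV x) (hb : b ∈ grW y) :
    P (a, 0) (0, b) = (0, blam P a b) ∧ blam P a b ∈ grW (x + y) := by
  have h := hP (0, x) (1, y) _ _ (mk_zero_mem_EgrP ha) (zero_mk_mem_EgrP hb)
  rw [Prod.mk_add_mk, zero_add, mem_EgrP_one] at h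
  exact ⟨Prod.ext h.1 rfl, h.2⟩

lemma apply_inr_inl {x y : Fin n → ℤ} {a : V} {b : W} (ha : a ∈ grV x) (hb : b ∈ grW y) :
    P (0, b) (a, 0) = (0, sgn (pairZ n x y) • brho n P x y a b)
      ∧ brho n P x y a b ∈ grW (x + y) := by
  have h := hP (1, y) (0, x) _ _ (zero_mk_mem_EgrP hb) (mk_zero_mem_EgrP ha)
  rw [Prod.mk_add_mk, add_zero, mem_EgrP_one] at h
  refine ⟨Prod.ext h.1 ?_, add_comm x y ▸ zsmul_mem h.2 _⟩
  rw [brho, smul_smul, sgn_mul_self, one_smul]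

lemma apply_inr_inr {y₁ y₂ : Fin n → ℤ} {b₁ b₂ : W} (h₁ : b₁ ∈ grW y₁) (h₂ : b₂ ∈ grW y₂) :
    P (0, b₁) (0, b₂) = 0 := by
  have h := hP (1, y₁) (1, y₂) _ _ (zero_mk_mem_EgrP h₁) (zero_mk_mem_EgrP h₂)
  simpa [EgrP] using h

lemma assoc_inl_inl_inl_iff {x₁ x₂ x₃ : Fin n → ℤ} {X₁ X₂ X₃ : V}
    (h₁ : X₁ ∈ grV x₁) (h₂ : X₂ ∈ grV x₂) (h₃ : X₃ ∈ grV x₃) :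
    P (P (X₁, 0) (X₂, 0)) (X₃, 0) = P (X₁, 0) (P (X₂, 0) (X₃, 0)) ↔
      bmu P (bmu P X₁ X₂) X₃ = bmu P X₁ (bmu P X₂ X₃) := by
  obtain ⟨e₁₂, m₁₂⟩ := apply_inl_inl hP h₁ h₂
  obtain ⟨e₂₃, m₂₃⟩ := apply_inl_inl hP h₂ h₃
  rw [e₁₂, e₂₃, (apply_inl_inl hP m₁₂ h₃).1, (apply_inl_inl hP h₁ m₂₃).1]
  simp only [Prod.mk.injEq, and_true]

lemma assoc_inl_inl_inr_iff {x₁ x₂ y : Fin n → ℤ} {X₁ X₂ : V} {Y : W}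
    (h₁ : X₁ ∈ grV x₁) (h₂ : X₂ ∈ grV x₂) (hY : Y ∈ grW y) :
    P (P (X₁, 0) (X₂, 0)) (0, Y) = P (X₁, 0) (P (X₂, 0) (0, Y)) ↔
      blam P (bmu P X₁ X₂) Y = blam P X₁ (blam P X₂ Y) := by
  obtain ⟨e₁₂, m₁₂⟩ := apply_inl_inl hP h₁ h₂
  obtain ⟨e₂Y, m₂Y⟩ := apply_inl_inr hP h₂ hY
  rw [e₁₂, e₂Y, (apply_inl_inr hP m₁₂ hY).1, (apply_inl_inr hP h₁ m₂Y).1]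
  simp only [Prod.mk.injEq, true_and]

lemma assoc_inr_inl_inl_iff {x₁ x₂ y : Fin n → ℤ} {X₁ X₂ : V} {Y : W}
    (h₁ : X₁ ∈ grV x₁) (h₂ : X₂ ∈ grV x₂) (hY : Y ∈ grW y) :
    P (P (0, Y) (X₁, 0)) (X₂, 0) = P (0, Y) (P (X₁, 0) (X₂, 0)) ↔
      brho n P (x₁ + x₂) y (bmu P X₁ X₂) Y
        = sgn (pairZ n x₁ x₂) • brho n P x₂ (x₁ + y) X₂ (brho n P x₁ y X₁ Y) := by
  obtain ⟨eY₁, mY₁⟩ := apply_inr_inl hP h₁ hY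
  obtain ⟨e₁₂, m₁₂⟩ := apply_inl_inl hP h₁ h₂
  rw [eY₁, e₁₂, (apply_inr_inl hP h₂ (zsmul_mem mY₁ _)).1, (apply_inr_inl hP m₁₂ hY).1]
  simp only [Prod.mk.injEq, true_and]
  rw [brho_zsmul, smul_smul, ← sgn_add]
  refine sgn_smul_eq_sgn_smul_iff ?_
  simp only [pairZ_eq_dotProduct, dotProduct_add, add_dotProduct, dotProduct_comm x₂ x₁]
  exact ⟨x₁ ⬝ᵥ x₂ + x₁ ⬝ᵥ y + x₂ ⬝ᵥ y, by ring⟩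

lemma assoc_inl_inr_inl_iff {x₁ x₂ y : Fin n → ℤ} {X₁ X₂ : V} {Y : W}
    (h₁ : X₁ ∈ grV x₁) (h₂ : X₂ ∈ grV x₂) (hY : Y ∈ grW y) :
    P (P (X₁, 0) (0, Y)) (X₂, 0) = P (X₁, 0) (P (0, Y) (X₂, 0)) ↔
      blam P X₁ (brho n P x₂ y X₂ Y)
        = sgn (pairZ n x₁ x₂) • brho n P x₂ (x₁ + y) X₂ (blam P X₁ Y) := by
  obtain ⟨e₁Y, m₁Y⟩ := apply_inl_inr hP h₁ hY
  obtain ⟨eY₂, mY₂⟩ := apply_inr_inl hP h₂ hY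
  rw [e₁Y, eY₂, (apply_inr_inl hP h₂ m₁Y).1, (apply_inl_inr hP h₁ (zsmul_mem mY₂ _)).1]
  simp only [Prod.mk.injEq, true_and]
  rw [blam_zsmul]
  refine sgn_smul_eq_sgn_smul_iff ?_
  simp only [pairZ_eq_dotProduct, dotProduct_add, dotProduct_comm x₂ x₁]
  exact ⟨x₁ ⬝ᵥ x₂ + x₂ ⬝ᵥ y, by ring⟩

lemma isMultigradedBimodule_of_assoc (hgrW : ⨆ y, grW y = ⊤)
    (H : ∀ g h k u v w, u ∈ EgrP 𝕂 n grV grW g → v ∈ EgrP 𝕂 n grV grW h →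
      w ∈ EgrP 𝕂 n grV grW k → P (P u v) w = P u (P v w)) :
    IsMultigradedBimodule n grV grW P := by
  refine ⟨fun x₁ x₂ x₃ X₁ X₂ X₃ h₁ h₂ h₃ => ?_, fun x₁ x₂ X₁ X₂ Y h₁ h₂ => ?_,
    fun x₁ x₂ y X₁ X₂ Y h₁ h₂ hY => ?_, fun x₁ x₂ y X₁ X₂ Y h₁ h₂ hY => ?_⟩
  · exact (assoc_inl_inl_inl_iff hP h₁ h₂ h₃).mp
      (H _ _ _ _ _ _ (mk_zero_mem_EgrP h₁) (mk_zero_mem_EgrP h₂) (mk_zero_mem_EgrP h₃))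
  · have hcomp : LinearMap.snd 𝕂 V W ∘ₗ P (bmu P X₁ X₂, 0) ∘ₗ LinearMap.inr 𝕂 V W
        = (LinearMap.snd 𝕂 V W ∘ₗ P (X₁, 0) ∘ₗ LinearMap.inr 𝕂 V W)
          ∘ₗ (LinearMap.snd 𝕂 V W ∘ₗ P (X₂, 0) ∘ₗ LinearMap.inr 𝕂 V W) :=
      linearMap_ext_of_iSup_eq_top hgrW fun _ _ hY => (assoc_inl_inl_inr_iff hP h₁ h₂ hY).mp
        (H _ _ _ _ _ _ (mk_zero_mem_EgrP h₁) (mk_zero_mem_EgrP h₂) (zero_mk_mem_EgrP hY))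
    exact LinearMap.congr_fun hcomp Y
  · exact (assoc_inr_inl_inl_iff hP h₁ h₂ hY).mp
      (H _ _ _ _ _ _ (zero_mk_mem_EgrP hY) (mk_zero_mem_EgrP h₁) (mk_zero_mem_EgrP h₂))
  · exact (assoc_inl_inr_inl_iff hP h₁ h₂ hY).mp
      (H _ _ _ _ _ _ (mk_zero_mem_EgrP h₁) (zero_mk_mem_EgrP hY) (mk_zero_mem_EgrP h₂))

lemma assoc_of_isMultigradedBimodule (hB : IsMultigradedBimodule n grV grW P)
    {g h k : ℤ × (Fin n → ℤ)} {u v w : V × W} (hu : u ∈ EgrP 𝕂 n grV grW g)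
    (hv : v ∈ EgrP 𝕂 n grV grW h) (hw : w ∈ EgrP 𝕂 n grV grW k) :
    P (P u v) w = P u (P v w) := by
  obtain ⟨h₁, h₂, h₃, h₄⟩ := hB
  obtain ⟨hu₁, hu₂⟩ := fst_mem_and_snd_mem_of_mem_EgrP hu
  obtain ⟨hv₁, hv₂⟩ := fst_mem_and_snd_mem_of_mem_EgrP hv
  obtain ⟨hw₁, hw₂⟩ := fst_mem_and_snd_mem_of_mem_EgrP hw
  apply apply_apply_eq_of_components
  rintro _ (rfl | rfl) _ (rfl | rfl) _ (rfl | rfl)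
  · exact (assoc_inl_inl_inl_iff hP hu₁ hv₁ hw₁).mpr (h₁ _ _ _ _ _ _ hu₁ hv₁ hw₁)
  · exact (assoc_inl_inl_inr_iff hP hu₁ hv₁ hw₂).mpr (h₂ _ _ _ _ _ hu₁ hv₁)
  · exact (assoc_inl_inr_inl_iff hP hu₁ hw₁ hv₂).mpr (h₄ _ _ _ _ _ _ hu₁ hw₁ hv₂)
  · obtain ⟨e, m⟩ := apply_inl_inr hP hu₁ hv₂
    rw [e, apply_inr_inr hP m hw₂, apply_inr_inr hP hv₂ hw₂, map_zero]
  · exact (assoc_inr_inl_inl_iff hP hv₁ hw₁ hu₂).mpr (h₃ _ _ _ _ _ _ hv₁ hw₁ hu₂)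
  · obtain ⟨e, m⟩ := apply_inr_inl hP hv₁ hu₂
    obtain ⟨e', m'⟩ := apply_inl_inr hP hv₁ hw₂
    rw [e, apply_inr_inr hP (zsmul_mem m _) hw₂, e', apply_inr_inr hP hu₂ m']
  · obtain ⟨e, m⟩ := apply_inr_inl hP hw₁ hv₂
    rw [apply_inr_inr hP hu₂ hv₂, e, apply_inr_inr hP hu₂ (zsmul_mem m _), map_zero,
      LinearMap.zero_apply]
  · rw [apply_inr_inr hP hu₂ hv₂, apply_inr_inr hP hv₂ hw₂, map_zero, map_zero,
      LinearMap.zero_apply]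

end Bimodule

theorem stmt12_general {𝕂 : Type} [Field 𝕂] [CharZero 𝕂] (n : ℕ)
    {V W : Type} [AddCommGroup V] [Module 𝕂 V] [AddCommGroup W] [Module 𝕂 W]
    (grV : (Fin n → ℤ) → Submodule 𝕂 V)
    (grW : (Fin n → ℤ) → Submodule 𝕂 W) (hgrW : DirectSum.IsInternal grW)
    (P : (V × W) →ₗ[𝕂] (V × W) →ₗ[𝕂] (V × W))
    (hP : ∀ (g h : ℤ × (Fin n → ℤ)) (u v : V × W),
      u ∈ EgrP 𝕂 n grV grW g → v ∈ EgrP 𝕂 n grV grW h →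
        P u v ∈ EgrP 𝕂 n grV grW (g + h)) :
    (∀ (x : ℕ → ℤ × (Fin n → ℤ)) (X : ℕ → V × W),
        (∀ i, X i ∈ EgrP 𝕂 n grV grW (x i)) →
        brD (prE n) 2 0 2 0 (KofBil P) (KofBil P) x X = 0) ↔
      ((∀ (x₁ x₂ x₃ : Fin n → ℤ) (X₁ X₂ X₃ : V),
          X₁ ∈ grV x₁ → X₂ ∈ grV x₂ → X₃ ∈ grV x₃ →
          bmu P (bmu P X₁ X₂) X₃ = bmu P X₁ (bmu P X₂ X₃)) ∧
       (∀ (x₁ x₂ : Fin n → ℤ) (X₁ X₂ : V) (Y : W),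
          X₁ ∈ grV x₁ → X₂ ∈ grV x₂ →
          blam P (bmu P X₁ X₂) Y = blam P X₁ (blam P X₂ Y)) ∧
       (∀ (x₁ x₂ y : Fin n → ℤ) (X₁ X₂ : V) (Y : W),
          X₁ ∈ grV x₁ → X₂ ∈ grV x₂ → Y ∈ grW y →
          brho n P (x₁ + x₂) y (bmu P X₁ X₂) Y
            = sgn (pairZ n x₁ x₂) • brho n P x₂ (x₁ + y) X₂ (brho n P x₁ y X₁ Y)) ∧
       (∀ (x₁ x₂ y : Fin n → ℤ) (X₁ X₂ : V) (Y : W),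
          X₁ ∈ grV x₁ → X₂ ∈ grV x₂ → Y ∈ grW y →
          blam P X₁ (brho n P x₂ y X₂ Y)
            = sgn (pairZ n x₁ x₂) • brho n P x₂ (x₁ + y) X₂ (blam P X₁ Y))) := by
  have : IsAddTorsionFree (V × W) := .of_isTorsionFree 𝕂 (V × W)
  rw [brD_KofBil_self_eq_zero_iff (prE_zero_left n)]
  exact ⟨isMultigradedBimodule_of_assoc hP hgrW.submodule_iSup_eq_top,
    fun hB _ _ _ _ _ _ => assoc_of_isMultigradedBimodule hP hB⟩

/-- Let `E` be the `(ℤ×ℤⁿ)`-graded space with `E^{(0,x)} = V^x`,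
`E^{(1,x)} = W^x`, and let `P ∈ M^{(1,0)}(E)` be bilinear of weight `(0,0)`.  With
`μ(X₁,X₂) = P(X₁,X₂)`, `λ(X)Y = P(X,Y)` and `ρ(X)Y = (−1)^{⟨x,y⟩}P(Y,X)`, one has
`[P,P]^Δ = 0` if and only if `(μ,λ,ρ)` is a multigraded bimodule structure, i.e.
(1) `μ` is associative, (2) `λ(μ(X₁,X₂)) = λ(X₁)∘λ(X₂)`,
(3) `ρ(μ(X₁,X₂)) = (−1)^{⟨x₁,x₂⟩} ρ(X₂)∘ρ(X₁)`, and
(4) `λ(X₁)∘ρ(X₂) = (−1)^{⟨x₁,x₂⟩} ρ(X₂)∘λ(X₁)` on homogeneous elements. -/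
theorem stmt12 {𝕂 : Type} [Field 𝕂] [CharZero 𝕂] (n : ℕ)
    {V W : Type} [AddCommGroup V] [Module 𝕂 V] [AddCommGroup W] [Module 𝕂 W]
    (grV : (Fin n → ℤ) → Submodule 𝕂 V) (hgrV : DirectSum.IsInternal grV)
    (grW : (Fin n → ℤ) → Submodule 𝕂 W) (hgrW : DirectSum.IsInternal grW)
    (P : (V × W) →ₗ[𝕂] (V × W) →ₗ[𝕂] (V × W))
    (hP : ∀ (g h : ℤ × (Fin n → ℤ)) (u v : V × W),
      u ∈ EgrP 𝕂 n grV grW g → v ∈ EgrP 𝕂 n grV grW h →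
        P u v ∈ EgrP 𝕂 n grV grW (g + h)) :
    (∀ (x : ℕ → ℤ × (Fin n → ℤ)) (X : ℕ → V × W),
        (∀ i, X i ∈ EgrP 𝕂 n grV grW (x i)) →
        brD (prE n) 2 0 2 0 (KofBil P) (KofBil P) x X = 0) ↔
      ((∀ (x₁ x₂ x₃ : Fin n → ℤ) (X₁ X₂ X₃ : V),
          X₁ ∈ grV x₁ → X₂ ∈ grV x₂ → X₃ ∈ grV x₃ →
          bmu P (bmu P X₁ X₂) X₃ = bmu P X₁ (bmu P X₂ X₃)) ∧
       (∀ (x₁ x₂ : Fin n → ℤ) (X₁ X₂ : V) (Y : W),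
          X₁ ∈ grV x₁ → X₂ ∈ grV x₂ →
          blam P (bmu P X₁ X₂) Y = blam P X₁ (blam P X₂ Y)) ∧
       (∀ (x₁ x₂ y : Fin n → ℤ) (X₁ X₂ : V) (Y : W),
          X₁ ∈ grV x₁ → X₂ ∈ grV x₂ → Y ∈ grW y →
          brho n P (x₁ + x₂) y (bmu P X₁ X₂) Y
            = sgn (pairZ n x₁ x₂) • brho n P x₂ (x₁ + y) X₂ (brho n P x₁ y X₁ Y)) ∧
       (∀ (x₁ x₂ y : Fin n → ℤ) (X₁ X₂ : V) (Y : W),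
          X₁ ∈ grV x₁ → X₂ ∈ grV x₂ → Y ∈ grW y →
          blam P X₁ (brho n P x₂ y X₂ Y)
            = sgn (pairZ n x₁ x₂) • brho n P x₂ (x₁ + y) X₂ (blam P X₁ Y))) :=
  stmt12_general n grV grW hgrW P hP

end NR
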